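/- The function S ↦ ‖exp(S)‖²_F is strictly convex on the space of real symmetric n×n matrices, where exp is the matrix exponential and ‖·‖_F is the Frobenius norm. -/

import Mathlib

open Matrix NormedSpace Finset

variable {n : ℕ}

/-- The orthogonal eigenvector matrix of a real symmetric matrix. -/
noncomputable def eV {M : Matrix (Fin n) (Fin n) ℝ} (hM : M.IsHermitian) :
    Matrix (Fin n) (Fin n) ℝ := hM.eigenvectorUnitary

lemma eV_mul_star {M : Matrix (Fin n) (Fin n) ℝ} (hM : M.IsHermitian) :
    eV hM * star (eV hM) = 1 := mem_unitaryGroup_iff.mp hM.eigenvectorUnitary.2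

lemma star_mul_eV {M : Matrix (Fin n) (Fin n) ℝ} (hM : M.IsHermitian) :
    star (eV hM) * eV hM = 1 := mem_unitaryGroup_iff'.mp hM.eigenvectorUnitary.2

lemma spec (M : Matrix (Fin n) (Fin n) ℝ) (hM : M.IsHermitian) :
    M = eV hM * diagonal hM.eigenvalues * star (eV hM) := by
  simpa [eV, RCLike.ofReal_real_eq_id, Unitary.conjStarAlgAut_apply] using hM.spectral_theorem

lemma exp_spec (M : Matrix (Fin n) (Fin n) ℝ) (hM : M.IsHermitian) :
    exp M = eV hM * diagonal (fun i => Real.exp (hM.eigenvalues i)) * star (eV hM) := by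
  have hs : star (eV hM) * eV hM = 1 := star_mul_eV hM
  have hinv : (eV hM)⁻¹ = star (eV hM) := inv_eq_left_inv hs
  have hU : IsUnit (eV hM) := ⟨⟨eV hM, star (eV hM), mul_eq_one_comm.mp hs, hs⟩, rfl⟩
  conv_lhs => rw [spec M hM, ← hinv, Matrix.exp_conj (eV hM) _ hU, Matrix.exp_diagonal]
  rw [hinv]
  congr 2
  funext i
  simp [Pi.exp_def, Real.exp_eq_exp_ℝ]

lemma row_sq_sum (M : Matrix (Fin n) (Fin n) ℝ) (hM : M.IsHermitian) (i : Fin n) :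
    ∑ j, (eV hM i j)^2 = 1 := by
  have := congrFun (congrFun (eV_mul_star hM) i) i
  simp only [Matrix.mul_apply, Matrix.star_apply, star_trivial, Matrix.one_apply_eq] at this
  simpa [sq] using this

lemma row_orth (M : Matrix (Fin n) (Fin n) ℝ) (hM : M.IsHermitian) {i k : Fin n} (hik : i ≠ k) :
    ∑ j, eV hM i j * eV hM k j = 0 := by
  have := congrFun (congrFun (eV_mul_star hM) i) k
  simpa only [Matrix.mul_apply, Matrix.star_apply, star_trivial, Matrix.one_apply,
    if_neg hik] using this

lemma entry_eq (M : Matrix (Fin n) (Fin n) ℝ) (hM : M.IsHermitian) (i k : Fin n) :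
    M i k = ∑ j, eV hM i j * hM.eigenvalues j * eV hM k j := by
  conv_lhs => rw [spec M hM]
  simp only [Matrix.mul_apply, Matrix.star_apply, star_trivial, Matrix.diagonal_apply,
    ite_mul, mul_ite, zero_mul, mul_zero, Finset.sum_ite_eq, Finset.sum_ite_eq',
    Finset.mem_univ, if_true]

lemma exp_entry_eq (M : Matrix (Fin n) (Fin n) ℝ) (hM : M.IsHermitian) (i k : Fin n) :
    exp M i k = ∑ j, eV hM i j * Real.exp (hM.eigenvalues j) * eV hM k j := by
  conv_lhs => rw [exp_spec M hM]
  simp only [Matrix.mul_apply, Matrix.star_apply, star_trivial, Matrix.diagonal_apply,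
    ite_mul, mul_ite, zero_mul, mul_zero, Finset.sum_ite_eq, Finset.sum_ite_eq',
    Finset.mem_univ, if_true]

lemma trace_exp_eq (M : Matrix (Fin n) (Fin n) ℝ) (hM : M.IsHermitian) :
    (exp M).trace = ∑ i, Real.exp (hM.eigenvalues i) := by
  rw [exp_spec M hM, Matrix.trace_mul_cycle, star_mul_eV hM, one_mul, Matrix.trace_diagonal]

lemma row_jensen (M : Matrix (Fin n) (Fin n) ℝ) (hM : M.IsHermitian) (i : Fin n) :
    Real.exp (M i i) ≤ exp M i i := by
  have h1 : M i i = ∑ j, (eV hM i j)^2 • hM.eigenvalues j := by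
    rw [entry_eq M hM i i]
    exact Finset.sum_congr rfl fun j _ => by rw [smul_eq_mul]; ring
  have h2 : exp M i i = ∑ j, (eV hM i j)^2 • Real.exp (hM.eigenvalues j) := by
    rw [exp_entry_eq M hM i i]
    exact Finset.sum_congr rfl fun j _ => by rw [smul_eq_mul]; ring
  rw [h1, h2]
  exact convexOn_exp.map_sum_le (fun j _ => sq_nonneg _) (row_sq_sum M hM i)
    (fun j _ => Set.mem_univ _)

lemma row_jensen_lt (M : Matrix (Fin n) (Fin n) ℝ) (hM : M.IsHermitian) (i : Fin n)
    (h : ∃ j l, eV hM i j ≠ 0 ∧ eV hM i l ≠ 0 ∧ hM.eigenvalues j ≠ hM.eigenvalues l) :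
    Real.exp (M i i) < exp M i i := by
  classical
  set t : Finset (Fin n) := Finset.univ.filter (fun j => eV hM i j ≠ 0) with ht
  have hfil : ∀ (f : Fin n → ℝ), (∑ j ∈ t, (eV hM i j)^2 • f j) = ∑ j, (eV hM i j)^2 • f j :=
    fun f => Finset.sum_filter_of_ne fun j _ hj h0 => hj (by rw [smul_eq_mul, h0]; ring)
  have h1 : M i i = ∑ j ∈ t, (eV hM i j)^2 • hM.eigenvalues j := by
    rw [hfil, entry_eq M hM i i]
    exact Finset.sum_congr rfl fun j _ => by rw [smul_eq_mul]; ring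
  have h2 : exp M i i = ∑ j ∈ t, (eV hM i j)^2 • Real.exp (hM.eigenvalues j) := by
    rw [hfil, exp_entry_eq M hM i i]
    exact Finset.sum_congr rfl fun j _ => by rw [smul_eq_mul]; ring
  have hw1 : ∑ j ∈ t, (eV hM i j)^2 = 1 := by
    have := hfil (fun _ => (1:ℝ))
    simp only [smul_eq_mul, mul_one] at this
    rw [this, row_sq_sum M hM i]
  rw [h1, h2]
  refine strictConvexOn_exp.map_sum_lt ?_ hw1 (fun j _ => Set.mem_univ _) ?_
  · intro j hj
    rw [ht, Finset.mem_filter] at hj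
    exact (sq_nonneg _).lt_of_ne (Ne.symm (pow_ne_zero 2 hj.2))
  · obtain ⟨j, l, hj, hl, hne⟩ := h
    exact ⟨j, by simp [ht, hj], l, by simp [ht, hl], hne⟩

lemma support_claim (M : Matrix (Fin n) (Fin n) ℝ) (hM : M.IsHermitian) {i k : Fin n}
    (hik : i ≠ k) (hMik : M i k ≠ 0) :
    ∃ j l, eV hM i j ≠ 0 ∧ eV hM i l ≠ 0 ∧ hM.eigenvalues j ≠ hM.eigenvalues l := by
  classical
  by_contra hcon
  push_neg at hcon
  have hex : ∃ j0, eV hM i j0 ≠ 0 := by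
    by_contra hz
    push_neg at hz
    have h1 := row_sq_sum M hM i
    rw [Finset.sum_eq_zero (fun j _ => by rw [hz j]; ring)] at h1
    exact one_ne_zero h1.symm
  obtain ⟨j0, hj0⟩ := hex
  apply hMik
  rw [entry_eq M hM i k]
  calc ∑ j, eV hM i j * hM.eigenvalues j * eV hM k j
      = ∑ j, hM.eigenvalues j0 * (eV hM i j * eV hM k j) := by
        refine Finset.sum_congr rfl fun j _ => ?_
        by_cases hj : eV hM i j = 0
        · rw [hj]; ring
        · rw [hcon j j0 hj hj0]; ring
    _ = hM.eigenvalues j0 * ∑ j, eV hM i j * eV hM k j := by rw [Finset.mul_sum]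
    _ = 0 := by rw [row_orth M hM hik, mul_zero]

lemma peierls_le (M : Matrix (Fin n) (Fin n) ℝ) (hM : M.IsHermitian) :
    ∑ i, Real.exp (M i i) ≤ (exp M).trace := by
  unfold Matrix.trace
  exact Finset.sum_le_sum fun i _ => row_jensen M hM i

lemma peierls_lt (M : Matrix (Fin n) (Fin n) ℝ) (hM : M.IsHermitian)
    (h : ∃ i k, i ≠ k ∧ M i k ≠ 0) :
    ∑ i, Real.exp (M i i) < (exp M).trace := by
  obtain ⟨i, k, hik, hMik⟩ := h
  unfold Matrix.trace
  exact Finset.sum_lt_sum (fun i _ => row_jensen M hM i)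
    ⟨i, Finset.mem_univ i, row_jensen_lt M hM i (support_claim M hM hik hMik)⟩

lemma conj_herm {M U : Matrix (Fin n) (Fin n) ℝ} (hM : M.IsHermitian) :
    (star U * M * U).IsHermitian := by
  unfold Matrix.IsHermitian
  rw [← Matrix.star_eq_conjTranspose, Matrix.star_mul, Matrix.star_mul, star_star,
    Matrix.star_eq_conjTranspose M, hM.eq, mul_assoc]

lemma trace_exp_conj (M : Matrix (Fin n) (Fin n) ℝ) {U : Matrix (Fin n) (Fin n) ℝ}
    (hU : U ∈ Matrix.unitaryGroup (Fin n) ℝ) :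
    (exp (star U * M * U)).trace = (exp M).trace := by
  have hs : star U * U = 1 := mem_unitaryGroup_iff'.mp hU
  have hinv : U⁻¹ = star U := inv_eq_left_inv hs
  have hUu : IsUnit U := ⟨⟨U, star U, mul_eq_one_comm.mp hs, hs⟩, rfl⟩
  rw [← hinv, Matrix.exp_conj' U M hUu, hinv, Matrix.trace_mul_cycle,
    mul_eq_one_comm.mp hs, one_mul]

/-- conjugation by a unitary is injective -/
lemma conj_inj {A B U : Matrix (Fin n) (Fin n) ℝ} (hU : U ∈ Matrix.unitaryGroup (Fin n) ℝ)
    (h : star U * A * U = star U * B * U) : A = B := by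
  have h1 : star U * U = 1 := mem_unitaryGroup_iff'.mp hU
  have h2 : U * star U = 1 := mem_unitaryGroup_iff.mp hU
  have h3 := congrArg (fun X => U * X * star U) h
  simp only [← mul_assoc] at h3
  rw [h2, one_mul, one_mul] at h3
  rw [mul_assoc, h2, mul_one, mul_assoc, h2, mul_one] at h3
  exact h3

/-- Strict convexity inequality for `trace ∘ exp` on Hermitian matrices. -/
lemma key (A B : Matrix (Fin n) (Fin n) ℝ) (hA : A.IsHermitian) (hB : B.IsHermitian)
    (hne : A ≠ B) {t s : ℝ} (ht : 0 < t) (hs : 0 < s) (hts : t + s = 1) :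
    (exp (t • A + s • B)).trace < t * (exp A).trace + s * (exp B).trace := by
  have hC : (t • A + s • B).IsHermitian := by
    unfold Matrix.IsHermitian
    rw [Matrix.conjTranspose_add, Matrix.conjTranspose_smul, Matrix.conjTranspose_smul,
      star_trivial, star_trivial, hA.eq, hB.eq]
  set U : Matrix (Fin n) (Fin n) ℝ := eV hC with hUdef
  have hUmem : U ∈ Matrix.unitaryGroup (Fin n) ℝ := hC.eigenvectorUnitary.2
  set A' := star U * A * U with hA'def
  set B' := star U * B * U with hB'def
  have hA' : A'.IsHermitian := conj_herm hA
  have hB' : B'.IsHermitian := conj_herm hB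
  -- eigenvalues of the combination
  have hdiag : star U * (t • A + s • B) * U = diagonal hC.eigenvalues := by
    have := hC.conjStarAlgAut_star_eigenvectorUnitary
    simpa [RCLike.ofReal_real_eq_id, Unitary.conjStarAlgAut_star_apply, hUdef, eV] using this
  have hlam : ∀ i, hC.eigenvalues i = t * A' i i + s * B' i i := by
    intro i
    have hsum : star U * (t • A + s • B) * U = t • A' + s • B' := by
      rw [hA'def, hB'def]
      rw [Matrix.mul_add, Matrix.add_mul, Matrix.mul_smul, Matrix.mul_smul,
        Matrix.smul_mul, Matrix.smul_mul]
    have := congrFun (congrFun (hdiag.symm.trans hsum) i) i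
    simpa [Matrix.diagonal_apply_eq] using this
  -- trace of exp of the combination
  have htr : (exp (t • A + s • B)).trace = ∑ i, Real.exp (hC.eigenvalues i) :=
    trace_exp_eq _ hC
  -- trace identities for A, B
  have htrA : (exp A').trace = (exp A).trace := trace_exp_conj A hUmem
  have htrB : (exp B').trace = (exp B).trace := trace_exp_conj B hUmem
  -- row bounds
  have hrow_le : ∀ i, Real.exp (hC.eigenvalues i) ≤
      t * Real.exp (A' i i) + s * Real.exp (B' i i) := by
    intro i
    rw [hlam i]
    have := convexOn_exp.2 (Set.mem_univ (A' i i)) (Set.mem_univ (B' i i)) ht.le hs.le hts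
    simpa [smul_eq_mul] using this
  have hsum_le : ∑ i, Real.exp (hC.eigenvalues i) ≤
      t * ∑ i, Real.exp (A' i i) + s * ∑ i, Real.exp (B' i i) := by
    rw [Finset.mul_sum, Finset.mul_sum, ← Finset.sum_add_distrib]
    exact Finset.sum_le_sum fun i _ => hrow_le i
  have hpA : ∑ i, Real.exp (A' i i) ≤ (exp A).trace := htrA ▸ peierls_le A' hA'
  have hpB : ∑ i, Real.exp (B' i i) ≤ (exp B).trace := htrB ▸ peierls_le B' hB'
  rw [htr]
  by_cases hd : ∃ i, A' i i ≠ B' i i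
  · -- strict at the diagonal
    obtain ⟨i0, hi0⟩ := hd
    have hstrict : ∑ i, Real.exp (hC.eigenvalues i) <
        t * ∑ i, Real.exp (A' i i) + s * ∑ i, Real.exp (B' i i) := by
      rw [Finset.mul_sum, Finset.mul_sum, ← Finset.sum_add_distrib]
      refine Finset.sum_lt_sum (fun i _ => hrow_le i) ⟨i0, Finset.mem_univ i0, ?_⟩
      rw [hlam i0]
      have := strictConvexOn_exp.2 (Set.mem_univ (A' i0 i0)) (Set.mem_univ (B' i0 i0))
        hi0 ht hs hts
      simpa [smul_eq_mul] using this
    calc ∑ i, Real.exp (hC.eigenvalues i)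
        < t * ∑ i, Real.exp (A' i i) + s * ∑ i, Real.exp (B' i i) := hstrict
      _ ≤ t * (exp A).trace + s * (exp B).trace := by
          gcongr
  · -- diagonals agree; some off-diagonal entry differs, so Peierls is strict for A' or B'
    push_neg at hd
    have hne' : A' ≠ B' := fun h => hne (conj_inj hUmem (by rw [← hA'def, ← hB'def, h]))
    have hoff : ∃ i k, i ≠ k ∧ (A' i k ≠ 0 ∨ B' i k ≠ 0) := by
      by_contra hoff
      push_neg at hoff
      apply hne'
      ext i k
      by_cases hik : i = k
      · rw [hik]; exact hd k
      · rw [(hoff i k hik).1, (hoff i k hik).2]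
    obtain ⟨i, k, hik, hor⟩ := hoff
    have hstrict : t * ∑ i, Real.exp (A' i i) + s * ∑ i, Real.exp (B' i i) <
        t * (exp A).trace + s * (exp B).trace := by
      rcases hor with hA0 | hB0
      · have h1 : ∑ i, Real.exp (A' i i) < (exp A).trace :=
          htrA ▸ peierls_lt A' hA' ⟨i, k, hik, hA0⟩
        have := mul_lt_mul_of_pos_left h1 ht
        nlinarith [mul_le_mul_of_nonneg_left hpB hs.le]
      · have h1 : ∑ i, Real.exp (B' i i) < (exp B).trace :=
          htrB ▸ peierls_lt B' hB' ⟨i, k, hik, hB0⟩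
        have := mul_lt_mul_of_pos_left h1 hs
        nlinarith [mul_le_mul_of_nonneg_left hpA ht.le]
    exact lt_of_le_of_lt hsum_le hstrict

theorem stmt_17 (n : ℕ) :
    StrictConvexOn ℝ {S : Matrix (Fin n) (Fin n) ℝ | S.IsSymm}
      (fun S : Matrix (Fin n) (Fin n) ℝ =>
        ((NormedSpace.exp S).transpose * NormedSpace.exp S).trace) := by
  have hF : ∀ z : Matrix (Fin n) (Fin n) ℝ, z.IsSymm →
      ((exp z).transpose * exp z).trace = (exp (z + z)).trace := by
    intro z hz
    rw [← Matrix.exp_transpose, hz, Matrix.exp_add_of_commute z z (Commute.refl z)]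
  constructor
  · intro x hx y hy a b _ _ _
    simp only [Set.mem_setOf_eq, Matrix.IsSymm] at *
    rw [Matrix.transpose_add, Matrix.transpose_smul, Matrix.transpose_smul, hx, hy]
  · intro x hx y hy hxy a b ha hb hab
    simp only [Set.mem_setOf_eq] at hx hy
    have hsymm : (a • x + b • y).IsSymm := by
      rw [Matrix.IsSymm, Matrix.transpose_add, Matrix.transpose_smul, Matrix.transpose_smul,
        hx, hy]
    have herm : ∀ z : Matrix (Fin n) (Fin n) ℝ, z.IsSymm → (z + z).IsHermitian := by
      intro z hz
      rw [Matrix.IsHermitian, Matrix.conjTranspose_eq_transpose_of_trivial,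
        Matrix.transpose_add, hz]
    have hcomb : (a • x + b • y) + (a • x + b • y) = a • (x + x) + b • (y + y) := by
      rw [smul_add, smul_add]; abel
    have hne : x + x ≠ y + y := by
      intro h
      rw [← two_smul ℝ x, ← two_smul ℝ y] at h
      exact hxy (smul_right_injective _ two_ne_zero h)
    simp only [smul_eq_mul]
    rw [hF _ hsymm, hF _ hx, hF _ hy, hcomb]
    exact key (x + x) (y + y) (herm x hx) (herm y hy) hne ha hb hab
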